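/- For n ≡ 0 or 3 (mod 4), the proportion bal_{S}(n)/n! of bw-balanced permutations of {1,...,n} is asymptotic to √(8/(πn)) along such n, i.e., lim (bal_S(n)/n!) · √(πn/8) = 1 as n → ∞ through n ≡ 0, 3 (mod 4). -/

import Mathlib

/-- Black contribution of letter `h` at (1-based) index `i`. -/
def blackC (i h : ℕ) : ℕ := if Odd i then (h + 1) / 2 else h / 2

/-- White contribution of letter `h` at (1-based) index `i`. -/
def whiteC (i h : ℕ) : ℕ := if Odd i then h / 2 else (h + 1) / 2

/-- Number of black cells in the bargraph of the word `w`. -/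
def black {n : ℕ} (w : Fin n → ℕ) : ℕ := ∑ i : Fin n, blackC (i.1 + 1) (w i)

/-- Number of white cells in the bargraph of the word `w`. -/
def white {n : ℕ} (w : Fin n → ℕ) : ℕ := ∑ i : Fin n, whiteC (i.1 + 1) (w i)

/-- The number of bw-balanced permutations of `{1,...,n}`. -/
def balS (n : ℕ) : ℕ :=
  (Finset.univ.filter fun π : Equiv.Perm (Fin n) =>
      black (fun i => (π i).1 + 1) = white (fun i => (π i).1 + 1)).card

/-
A letter `h` at position `i` of a word contributes `⌊h/2⌋` black and `⌊h/2⌋` white cells, plus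
one extra cell when `h` is odd, black at odd positions and white at even ones. So a permutation
is bw-balanced iff its `⌈n/2⌉ = 2m` odd letters sit equally often at odd and at even positions.
Choosing those positions and then arranging the odd and the even letters gives
`bal_S(n) = (2m)! (n-2m)! C(2m,m) C(n-2m,m)`, which for `n ∈ {4m, 4m-1}` makes
`bal_S(n)/n! = C(2m,m)² / C(4m,2m)`. Stirling's formula, in the form `C(2k,k) ~ 4^k/√(πk)`,
then gives `bal_S(n)/n! ~ √(2/(πm)) ~ √(8/(πn))`.
-/
open Finset Equiv Nat

section Perm

variable {α : Type*} [Fintype α] [DecidableEq α]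

theorem card_filter_card_inter_card_sdiff (V : Finset α) (a b : ℕ) :
    #{A : Finset α | #(A ∩ V) = a ∧ #(A \ V) = b} = (#V).choose a * (#Vᶜ).choose b := by
  rw [← card_powersetCard, ← card_powersetCard, ← card_product]
  have split_eq {B C : Finset α} (hB : B ⊆ V) (hC : C ⊆ Vᶜ) :
      (B ∪ C) ∩ V = B ∧ (B ∪ C) \ V = C := by
    constructor <;> ext x <;> grind [mem_compl]
  refine card_nbij' (fun A => (A ∩ V, A \ V)) (fun p => p.1 ∪ p.2) ?_ ?_ ?_ ?_
  · intro A hA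
    simp only [coe_filter, mem_univ, true_and, Set.mem_ofPred_eq, mem_coe, mem_product,
      mem_powersetCard] at hA ⊢
    exact ⟨⟨inter_subset_right, hA.1⟩, fun x hx => mem_compl.2 (mem_sdiff.1 hx).2, hA.2⟩
  · rintro ⟨B, C⟩ h
    simp only [mem_coe, mem_product, mem_powersetCard] at h
    simp [split_eq h.1.1 h.2.1, h.1.2, h.2.2]
  · intro A _
    exact (union_comm _ _).trans (sdiff_union_inter A V)
  · rintro ⟨B, C⟩ h
    simp only [mem_coe, mem_product, mem_powersetCard] at h
    simp [split_eq h.1.1 h.2.1]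

theorem exists_perm_apply_mem_iff_mem {A V : Finset α} (h : #A = #V) :
    ∃ π₀ : Perm α, ∀ i, π₀ i ∈ V ↔ i ∈ A := by
  let e : {x // x ∈ A} ≃ {x // x ∈ V} := Fintype.equivOfCardEq (by simpa)
  let f : {x // x ∉ A} ≃ {x // x ∉ V} :=
    Fintype.equivOfCardEq (by simp [Fintype.card_subtype_compl, h])
  refine ⟨Equiv.subtypeCongr e f, fun i => ?_⟩
  by_cases hi : i ∈ A
  · simp [Equiv.subtypeCongr, hi, Equiv.sumCompl_symm_apply_of_pos hi]
  · simpa [Equiv.subtypeCongr, hi, Equiv.sumCompl_symm_apply_of_neg hi] using (f ⟨i, hi⟩).2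

/-- These permutations form a coset of the stabiliser of `V`, which is `Perm V × Perm Vᶜ`. -/
theorem card_perm_apply_mem_iff_mem {A V : Finset α} (h : #A = #V) :
    #{π : Perm α | ∀ i, π i ∈ V ↔ i ∈ A} = (#V)! * (Fintype.card α - #V)! := by
  obtain ⟨π₀, hπ₀⟩ := exists_perm_apply_mem_iff_mem h
  rw [← Fintype.card_subtype]
  calc Fintype.card {π : Perm α // ∀ i, π i ∈ V ↔ i ∈ A}
      = Fintype.card {σ : Perm α // (decide <| · ∈ V) ∘ σ = (decide <| · ∈ V)} :=
        Fintype.card_congr <| (Equiv.mulRight π₀⁻¹).subtypeEquiv fun π => by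
          simp only [funext_iff, Function.comp_apply, decide_eq_decide]
          conv_rhs => rw [← π₀.forall_congr_right]
          simp [hπ₀]
    _ = _ := by
        rw [DomMulAct.stabilizer_card, Fintype.prod_bool]
        simp [Fintype.card_subtype, ← Finset.compl_filter, Finset.card_compl]

theorem card_filter_apply_mem (π : Perm α) (V : Finset α) : #{i | π i ∈ V} = #V := by
  rw [← Fintype.card_subtype, ← Fintype.card_coe]
  exact Fintype.card_congr (π.subtypeEquiv fun _ => Iff.rfl)

theorem card_perm_card_preimage_inter (V : Finset α) (a : ℕ) :
    #{π : Perm α | #(({i | π i ∈ V} : Finset α) ∩ V) = a} =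
      (#V)! * (Fintype.card α - #V)! *
        ((#V).choose a * (Fintype.card α - #V).choose (#V - a)) := by
  have h_sdiff {π : Perm α} :
      #(({i | π i ∈ V} : Finset α) \ V) = #V - #(({i | π i ∈ V} : Finset α) ∩ V) := by
    rw [← card_filter_apply_mem π V, ← card_sdiff_add_card_inter {i | π i ∈ V} V,
      Nat.add_sub_cancel]
  rw [card_eq_sum_card_fiberwise (f := fun π : Perm α => ({i | π i ∈ V} : Finset α))
    (t := {A | #(A ∩ V) = a ∧ #(A \ V) = #V - a}) ?mapsTo]
  case mapsTo =>
    intro π hπ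
    simp only [coe_filter, mem_univ, true_and, Set.mem_ofPred_eq] at hπ ⊢
    exact ⟨hπ, hπ ▸ h_sdiff⟩
  rw [sum_congr rfl (g := fun _ => (#V)! * (Fintype.card α - #V)!), sum_const, smul_eq_mul,
    card_filter_card_inter_card_sdiff, card_compl, mul_comm]
  intro A hA
  simp only [mem_filter, mem_univ, true_and] at hA
  rw [filter_filter, ← card_perm_apply_mem_iff_mem (A := A) ?_]
  · congr 1
    ext π
    simp only [mem_filter, mem_univ, true_and]
    constructor
    · rintro ⟨-, rfl⟩ i
      simp
    · intro h
      have : ({i | π i ∈ V} : Finset α) = A := by ext i; simp [h i]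
      exact ⟨this ▸ hA.1, this⟩
  · have := card_le_card (inter_subset_right (s₁ := A) (s₂ := V))
    have := card_sdiff_add_card_inter A V
    omega

end Perm

theorem black_eq_sum_add_card {n : ℕ} (w : Fin n → ℕ) :
    black w = ∑ i, w i / 2 + #{i : Fin n | Even (i : ℕ) ∧ Odd (w i)} := by
  rw [black, card_filter, ← sum_add_distrib]
  refine sum_congr rfl fun i _ => ?_
  simp only [blackC, Nat.odd_iff, Nat.even_iff]
  split_ifs <;> omega

theorem white_eq_sum_add_card {n : ℕ} (w : Fin n → ℕ) :
    white w = ∑ i, w i / 2 + #{i : Fin n | ¬Even (i : ℕ) ∧ Odd (w i)} := by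
  rw [white, card_filter, ← sum_add_distrib]
  refine sum_congr rfl fun i _ => ?_
  simp only [whiteC, Nat.odd_iff, Nat.even_iff]
  split_ifs <;> omega

/-- Even `0`-based indices: the odd positions of a word in the paper's `1`-based numbering. -/
def evenPositions (n : ℕ) : Finset (Fin n) := {i | Even (i : ℕ)}

theorem card_evenPositions (n : ℕ) : #(evenPositions n) = (n + 1) / 2 := by
  rw [evenPositions, card_filter, Fin.sum_univ_eq_sum_range (fun j => if Even j then 1 else 0)]
  induction n with
  | zero => rfl
  | succ n ih =>
    rw [sum_range_succ, ih]
    simp only [Nat.even_iff]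
    split_ifs <;> omega

theorem black_eq_white_iff {n : ℕ} (π : Perm (Fin n)) :
    black (fun i => (π i : ℕ) + 1) = white (fun i => (π i : ℕ) + 1) ↔
      2 * #(({i | π i ∈ evenPositions n} : Finset (Fin n)) ∩ evenPositions n) =
        (n + 1) / 2 := by
  set E := evenPositions n
  set A : Finset (Fin n) := {i | π i ∈ E}
  have h_black : #{i : Fin n | Even (i : ℕ) ∧ Odd ((π i : ℕ) + 1)} = #(A ∩ E) := by
    congr 1; ext i; simp [A, E, evenPositions, Nat.odd_add_one, and_comm]
  have h_white : #{i : Fin n | ¬Even (i : ℕ) ∧ Odd ((π i : ℕ) + 1)} = #(A \ E) := by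
    congr 1; ext i; simp [A, E, evenPositions, Nat.odd_add_one, and_comm]
  have h_total := card_sdiff_add_card_inter A E
  rw [card_filter_apply_mem, card_evenPositions] at h_total
  rw [black_eq_sum_add_card, white_eq_sum_add_card, add_right_inj, h_black, h_white]
  omega

theorem balS_eq {n m : ℕ} (hn : (n + 1) / 2 = 2 * m) :
    balS n = (2 * m)! * (n - 2 * m)! * ((2 * m).choose m * (n - 2 * m).choose m) := by
  have h_count := card_perm_card_preimage_inter (evenPositions n) m
  rw [card_evenPositions, hn, Fintype.card_fin, show 2 * m - m = m by omega] at h_count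
  rw [balS, ← h_count]
  congr 1
  refine filter_congr fun π _ => ?_
  rw [black_eq_white_iff, hn]
  omega

theorem centralBinom_succ_eq_two_mul_choose (k : ℕ) :
    centralBinom (k + 1) = 2 * (2 * k + 1).choose k := by
  rw [centralBinom_eq_two_mul_choose, show 2 * (k + 1) = 2 * k + 1 + 1 by ring,
    choose_succ_succ', choose_symm_half, ← two_mul]

theorem balS_mul_centralBinom {n : ℕ} (hn : n % 4 = 0 ∨ n % 4 = 3) :
    balS n * (2 * ((n + 1) / 4)).centralBinom = ((n + 1) / 4).centralBinom ^ 2 * n ! := by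
  obtain ⟨m, rfl | rfl⟩ : ∃ m, n = 4 * m ∨ n = 4 * m + 3 := ⟨n / 4, by omega⟩
  · have h_fact := add_choose_mul_factorial_mul_factorial (2 * m) (2 * m)
    rw [← two_mul, ← centralBinom_eq_two_mul_choose] at h_fact
    rw [show (4 * m + 1) / 4 = m by omega, balS_eq (m := m) (by omega),
      show 4 * m - 2 * m = 2 * m by omega, ← centralBinom_eq_two_mul_choose,
      show 4 * m = 2 * (2 * m) by ring, ← h_fact]
    ring
  · have h_small : (2 * m + 2).choose (m + 1) = 2 * (2 * m + 1).choose m := by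
      rw [← centralBinom_succ_eq_two_mul_choose, centralBinom_eq_two_mul_choose, mul_add_one]
    have h_big : centralBinom (2 * m + 2) = 2 * (4 * m + 3).choose (2 * m + 1) := by
      rw [centralBinom_succ_eq_two_mul_choose, show 2 * (2 * m + 1) + 1 = 4 * m + 3 by ring]
    have h_fact := add_choose_mul_factorial_mul_factorial (2 * m + 2) (2 * m + 1)
    rw [show 2 * m + 2 + (2 * m + 1) = 4 * m + 3 by ring] at h_fact
    rw [show (4 * m + 3 + 1) / 4 = m + 1 by omega, balS_eq (m := m + 1) (by omega),
      show 4 * m + 3 - 2 * (m + 1) = 2 * m + 1 by omega, centralBinom_eq_two_mul_choose (m + 1),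
      show 2 * (m + 1) = 2 * m + 2 by ring, h_small, h_big, choose_symm_half, ← h_fact]
    ring

open Real Filter Topology Stirling

theorem centralBinom_mul_sqrt_div_four_pow_eq {k : ℕ} (hk : k ≠ 0) :
    (centralBinom k : ℝ) * √(π * k) / 4 ^ k =
      √π * (stirlingSeq (2 * k) / stirlingSeq k ^ 2) := by
  have h_fact : ((2 * k)! : ℝ) = centralBinom k * (k ! * k !) := by
    rw [centralBinom_eq_two_mul_choose, two_mul, ← add_choose_mul_factorial_mul_factorial k k]
    push_cast
    ring
  have hk' : (0 : ℝ) < k := by positivity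
  simp only [stirlingSeq, h_fact]
  push_cast
  rw [Real.sqrt_mul' _ hk'.le, Real.sqrt_mul' _ (by positivity), Real.sqrt_mul' _ hk'.le]
  simp only [mul_pow, div_pow, ← pow_mul,
    show (4 : ℝ) ^ k = 2 ^ (2 * k) by rw [pow_mul]; norm_num]
  field_simp
  ring

theorem tendsto_centralBinom_mul_sqrt_div_four_pow :
    Tendsto (fun k : ℕ => (centralBinom k : ℝ) * √(π * k) / 4 ^ k) atTop (𝓝 1) := by
  have h_lim : Tendsto (fun k : ℕ => √π * (stirlingSeq (2 * k) / stirlingSeq k ^ 2)) atTop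
      (𝓝 (√π * (√π / √π ^ 2))) :=
    ((tendsto_stirlingSeq_sqrt_pi.comp (tendsto_id.const_mul_atTop' two_pos)).div
      (tendsto_stirlingSeq_sqrt_pi.pow 2) (by positivity)).const_mul _
  rw [show √π * (√π / √π ^ 2) = 1 by field_simp] at h_lim
  exact h_lim.congr' <| (eventually_ne_atTop 0).mono fun k hk =>
    (centralBinom_mul_sqrt_div_four_pow_eq hk).symm

theorem tendsto_centralBinom_sq_div_centralBinom_two_mul :
    Tendsto (fun m : ℕ => (centralBinom m : ℝ) ^ 2 / centralBinom (2 * m) * √(π * m / 2))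
      atTop (𝓝 1) := by
  have h_lim := (tendsto_centralBinom_mul_sqrt_div_four_pow.pow 2).div
    (tendsto_centralBinom_mul_sqrt_div_four_pow.comp (tendsto_id.const_mul_atTop' two_pos))
    one_ne_zero
  rw [one_pow, div_one] at h_lim
  refine h_lim.congr' <| (eventually_ne_atTop 0).mono fun m hm => ?_
  have hm' : (0 : ℝ) < m := by positivity
  have h_sqrt : √(π * m / 2) = π * m / √(π * (2 * m)) := by
    rw [eq_div_iff (by positivity), ← Real.sqrt_mul (by positivity),
      show π * m / 2 * (π * (2 * m)) = (π * m) ^ 2 by ring, Real.sqrt_sq (by positivity)]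
  simp only [Pi.div_apply, Function.comp_apply, id, h_sqrt, div_pow, mul_pow,
    Real.sq_sqrt (by positivity : 0 ≤ π * m), ← pow_mul]
  push_cast
  field_simp
  ring

theorem tendsto_sqrt_div_four_mul_div_four :
    Tendsto (fun n : ℕ => √((n : ℝ) / (4 * ((n + 1) / 4 : ℕ))))
      (atTop ⊓ 𝓟 {n : ℕ | n % 4 = 0 ∨ n % 4 = 3}) (𝓝 1) := by
  rw [← Real.sqrt_one]
  refine (continuous_sqrt.tendsto 1).comp ?_
  have h_bounds : ∀ᶠ n : ℕ in atTop ⊓ 𝓟 {n : ℕ | n % 4 = 0 ∨ n % 4 = 3},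
      n ≤ 4 * ((n + 1) / 4) ∧ 4 * ((n + 1) / 4) ≤ n + 1 ∧ 0 < (n + 1) / 4 := by
    filter_upwards [eventually_inf_principal.2 (Eventually.of_forall fun n hn => hn),
      (eventually_ge_atTop 3).filter_mono inf_le_left] with n hn h3
    omega
  refine tendsto_of_tendsto_of_tendsto_of_le_of_le'
    ((tendsto_natCast_div_add_atTop (1 : ℝ)).mono_left inf_le_left) tendsto_const_nhds ?_ ?_
  · filter_upwards [h_bounds] with n h_bound
    obtain ⟨-, h_le, h_pos⟩ := h_bound
    gcongr
    exact_mod_cast h_le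
  · filter_upwards [h_bounds] with n h_bound
    obtain ⟨h_le, -, h_pos⟩ := h_bound
    rw [div_le_one (by positivity)]
    exact_mod_cast h_le

theorem stmt_18 :
    Filter.Tendsto
      (fun n : ℕ => (balS n : ℝ) / (n.factorial : ℝ) * Real.sqrt (Real.pi * n / 8))
      (Filter.atTop ⊓ Filter.principal {n : ℕ | n % 4 = 0 ∨ n % 4 = 3})
      (nhds 1) := by
  have h_quarter :
      Tendsto (fun n : ℕ => (n + 1) / 4) (atTop ⊓ 𝓟 {n : ℕ | n % 4 = 0 ∨ n % 4 = 3}) atTop :=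
    ((Nat.tendsto_div_const_atTop four_ne_zero).comp (tendsto_add_atTop_nat 1)).mono_left
      inf_le_left
  have h_lim := (tendsto_centralBinom_sq_div_centralBinom_two_mul.comp h_quarter).mul
    tendsto_sqrt_div_four_mul_div_four
  rw [mul_one] at h_lim
  refine h_lim.congr' ?_
  filter_upwards [eventually_inf_principal.2 (Eventually.of_forall fun n hn => hn),
    (eventually_ge_atTop 3).filter_mono inf_le_left] with n hn h3
  set m := (n + 1) / 4
  have hm : (0 : ℝ) < m := by norm_cast; omega
  have h_ratio : (balS n : ℝ) / n ! = (centralBinom m : ℝ) ^ 2 / centralBinom (2 * m) := by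
    rw [div_eq_div_iff (by positivity) (by exact_mod_cast (2 * m).centralBinom_ne_zero)]
    exact_mod_cast balS_mul_centralBinom hn
  simp only [Function.comp_apply, h_ratio, mul_assoc]
  rw [← Real.sqrt_mul (by positivity)]
  congr 2
  field_simp
  ring
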